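/- Let O be a finite order ideal in the terms of n variables, and fix an enumeration β_1,…,β_m of ∂O with nondecreasing degrees; for each i put M_{β_i} = {η a term : β_j does not divide η·β_i for every j > i}. Let η be a term and i an index with η ∈ M_{β_i}. Then ind_O(η·β_i) = deg(η) + 1, and for every δ ∈ O with η·δ ∉ O one has ind_O(η·δ) ≤ deg(η) < ind_O(η·β_i). -/

import Mathlib

open MvPolynomial

/-- A term in `n` variables, viewed as its exponent vector in `ℕ^n`. -/
abbrev Term (n : ℕ) := Fin n →₀ ℕ

/-- The total degree of a term. -/
def termDeg {n : ℕ} (τ : Term n) : ℕ := τ.sum fun _ e => e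

/-- `O` is an order ideal: every divisor (componentwise `≤`) of a term of `O` lies in `O`. -/
def IsOrderIdeal {n : ℕ} (O : Set (Term n)) : Prop :=
  ∀ σ τ : Term n, τ ∈ O → σ ≤ τ → σ ∈ O

/-- The border `∂O` of an order ideal `O`. -/
def border {n : ℕ} (O : Set (Term n)) : Set (Term n) :=
  {μ | μ ∉ O ∧ ∃ τ ∈ O, ∃ i : Fin n, μ = τ + Finsupp.single i 1}

/-- The Pommaret basis `P_O = {σ ∉ O : σ / min σ ∈ O}` of the monomial ideal generated by the
terms outside `O`; here `i` is the minimal variable of `σ`. -/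
def pommaret {n : ℕ} (O : Set (Term n)) : Set (Term n) :=
  {σ | σ ∉ O ∧ ∃ i : Fin n, σ i ≠ 0 ∧ (∀ j : Fin n, j < i → σ j = 0) ∧
    σ - Finsupp.single i 1 ∈ O}

/-- `F` is an `H`-marked set (with tails in `O`): for every `α ∈ H`,
`F α = α - Σ_{σ ∈ O} c_σ σ`, i.e. the coefficient of `α` is `1` and all other
terms in the support of `F α` lie in `O`. -/
def IsMarkedSet {n : ℕ} (A : Type*) [CommRing A] (O H : Set (Term n))
    (F : Term n → MvPolynomial (Fin n) A) : Prop :=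
  ∀ α ∈ H, (F α).coeff α = 1 ∧ ∀ γ ∈ (F α).support, γ ≠ α → γ ∈ O

/-- The `A`-submodule `⟨O⟩_A` of `R_A` spanned by the monomials with exponent in `O`. -/
noncomputable def OSpan {n : ℕ} (A : Type*) [CommRing A] (O : Set (Term n)) :
    Submodule A (MvPolynomial (Fin n) A) :=
  Submodule.span A ((fun σ : Term n => (monomial σ (1 : A) : MvPolynomial (Fin n) A)) '' O)

/-- `R_A = (S) ⊕ ⟨O⟩_A` as an internal direct sum of `A`-modules. -/
def IsBasisDecomp {n : ℕ} (A : Type*) [CommRing A] (O : Set (Term n))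
    (S : Set (MvPolynomial (Fin n) A)) : Prop :=
  (Submodule.restrictScalars A (Ideal.span S) ⊓ OSpan A O = ⊥) ∧
  (Submodule.restrictScalars A (Ideal.span S) ⊔ OSpan A O = ⊤)

/-- `F` is an `H`-marked basis. -/
def IsMarkedBasis {n : ℕ} (A : Type*) [CommRing A] (O H : Set (Term n))
    (F : Term n → MvPolynomial (Fin n) A) : Prop :=
  IsMarkedSet A O H F ∧ IsBasisDecomp A O (F '' H)

/-- The iterated borders: `∂^0 O = O` and `∂^{k+1} O = ∂(∂^0 O ∪ ⋯ ∪ ∂^k O)`. -/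
def borderIter {n : ℕ} (O : Set (Term n)) : ℕ → Set (Term n)
  | 0 => O
  | k + 1 => border (⋃ j : Fin (k + 1), borderIter O j.1)
decreasing_by exact j.2

/-- The index `ind_O(μ)`: the least `k` with `μ ∈ ∂^k O`. -/
noncomputable def indO {n : ℕ} (O : Set (Term n)) (μ : Term n) : ℕ :=
  sInf {k | μ ∈ borderIter O k}

/-- The multiplicative set of `β i` for the degree-ordered border reduction structure:
`M_{β_i} = {η : β_j ∤ η β_i for every j > i}`. -/
def multSet {n m : ℕ} (β : Fin m → Term n) (i : Fin m) : Set (Term n) :=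
  {η | ∀ j : Fin m, i < j → ¬ β j ≤ η + β i}

/-- The cone of `β i` by its multiplicative set. -/
def cone {n m : ℕ} (β : Fin m → Term n) (i : Fin m) : Set (Term n) :=
  {γ | ∃ η ∈ multSet β i, γ = η + β i}

/-- One step of border reduction: some `γ = η β_i ∈ supp g` with `η ∈ M_{β_i}` is replaced
using the marked polynomial `B i`. -/
def BStep {n m : ℕ} {A : Type*} [CommRing A] (β : Fin m → Term n)
    (B : Fin m → MvPolynomial (Fin n) A) (g h : MvPolynomial (Fin n) A) : Prop :=
  ∃ (i : Fin m) (η : Term n), η ∈ multSet β i ∧ η + β i ∈ g.support ∧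
    h = g - monomial η (g.coeff (η + β i)) * B i

/-- The S-polynomial of two marked polynomials with head terms `α`, `α'`. -/
noncomputable def Spoly {n : ℕ} {A : Type*} [CommRing A] (α α' : Term n)
    (f f' : MvPolynomial (Fin n) A) : MvPolynomial (Fin n) A :=
  monomial (α ⊔ α' - α) 1 * f - monomial (α ⊔ α' - α') 1 * f'

/-- `(α, α')` is a neighbour couple of distinct terms. -/
def Neighbour {n : ℕ} (α α' : Term n) : Prop :=
  α ≠ α' ∧ ((∃ j : Fin n, α = α' + Finsupp.single j 1) ∨
    (∃ i j : Fin n, α + Finsupp.single i 1 = α' + Finsupp.single j 1))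

/-- `(β i, β j)` is a non-multiplicative couple for the border reduction structure. -/
def NonMultB {n m : ℕ} (β : Fin m → Term n) (i j : Fin m) : Prop :=
  ∃ (ℓ : Fin n) (δ : Term n), Finsupp.single ℓ 1 ∉ multSet β i ∧ δ ∈ multSet β j ∧
    Finsupp.single ℓ 1 + β i = δ + β j

/-- The Pommaret multiplicative set of a term `α`: terms in the variables `x_1, …, min α`. -/
def pommMult {n : ℕ} (α : Term n) : Set (Term n) :=
  {η | ∀ j : Fin n, η j ≠ 0 → ∀ k : Fin n, k < j → α k = 0}

/-- One step of Pommaret reduction. -/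
def PStep {n : ℕ} {A : Type*} [CommRing A] (O : Set (Term n))
    (P : Term n → MvPolynomial (Fin n) A) (g h : MvPolynomial (Fin n) A) : Prop :=
  ∃ α ∈ pommaret O, ∃ η ∈ pommMult α, η + α ∈ g.support ∧
    h = g - monomial η (g.coeff (η + α)) * P α

/-- `(α, α')` is a non-multiplicative couple for the Pommaret reduction structure. -/
def NonMultP {n : ℕ} (α α' : Term n) : Prop :=
  ∃ ℓ : Fin n, Finsupp.single ℓ 1 ∉ pommMult α ∧
    ∃ δ ∈ pommMult α', Finsupp.single ℓ 1 + α = δ + α'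

/-!
A border term `b` has index `1`, and multiplying by a variable raises the index by at most one, so
`ind_O(η b) ≤ deg η + 1`. Conversely, unwinding the definition of `∂^(k+1) O` writes each of its
elements as `η' b'` with `b' ∈ ∂O` and `deg η' ≤ k`. For `η ∈ M_{β_i}` every border divisor of
`η β_i` is some `β_j` with `j ≤ i`, hence of degree at most `deg β_i`, which forces
`ind_O(η β_i) = deg η + 1`. For `δ ∈ O` with `η δ ∉ O`, a minimal term outside `O` among the
multiples of `δ` dividing `η δ` is a border term `b = δ c` with `c ≠ 1`, and `η δ = (η / c) b`
gives `ind_O(η δ) ≤ deg η`.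
-/

open Finsupp

section Term

variable {n : ℕ}

lemma termDeg_eq_degree (τ : Term n) : termDeg τ = τ.degree := rfl

lemma termDeg_add (σ τ : Term n) : termDeg (σ + τ) = termDeg σ + termDeg τ :=
  map_add degree σ τ

lemma termDeg_single_one (i : Fin n) : termDeg (single i 1) = 1 :=
  degree_single i 1

lemma termDeg_eq_zero_iff {τ : Term n} : termDeg τ = 0 ↔ τ = 0 :=
  degree_eq_zero_iff τ

lemma exists_eq_add_single_of_termDeg_eq_succ {τ : Term n} {d : ℕ} (h : termDeg τ = d + 1) :
    ∃ σ i, termDeg σ = d ∧ τ = σ + single i 1 := by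
  obtain ⟨i, hi⟩ : ∃ i, τ i ≠ 0 := by
    by_contra! h0
    rw [show τ = 0 from Finsupp.ext h0, termDeg_eq_degree, map_zero] at h
    omega
  have hle : single i 1 ≤ τ := single_le_iff.mpr (Nat.one_le_iff_ne_zero.mpr hi)
  have hτ : τ = (τ - single i 1) + single i 1 := (tsub_add_cancel_of_le hle).symm
  refine ⟨τ - single i 1, i, ?_, hτ⟩
  rw [hτ, termDeg_add, termDeg_single_one] at h
  omega

end Term

section BorderIter

variable {n : ℕ} {O : Set (Term n)}

lemma borderIter_zero (O : Set (Term n)) : borderIter O 0 = O := by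
  rw [borderIter]

lemma borderIter_succ (O : Set (Term n)) (k : ℕ) :
    borderIter O (k + 1) = border (⋃ j : Fin (k + 1), borderIter O j) := by
  rw [borderIter]

lemma mem_iUnion_borderIter {k : ℕ} {μ : Term n} :
    μ ∈ ⋃ j : Fin (k + 1), borderIter O j ↔ ∃ j ≤ k, μ ∈ borderIter O j := by
  simp only [Set.mem_iUnion]
  exact ⟨fun ⟨j, hj⟩ => ⟨j, Nat.lt_succ_iff.mp j.2, hj⟩,
    fun ⟨j, hj, hμ⟩ => ⟨⟨j, Nat.lt_succ_iff.mpr hj⟩, hμ⟩⟩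

lemma borderIter_one (O : Set (Term n)) : borderIter O 1 = border O := by
  rw [borderIter_succ]
  congr
  ext μ
  simp [borderIter_zero]

lemma exists_eq_add_of_mem_borderIter_succ {k : ℕ} {μ : Term n}
    (h : μ ∈ borderIter O (k + 1)) :
    ∃ η, ∃ b ∈ border O, termDeg η ≤ k ∧ μ = η + b := by
  induction k using Nat.strong_induction_on generalizing μ with
  | _ k ih =>
    rw [borderIter_succ] at h
    obtain ⟨hμ, τ, hτ, i, rfl⟩ := h
    obtain ⟨j, hj, hτj⟩ := mem_iUnion_borderIter.mp hτ
    match j, hj, hτj with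
    | 0, _, hτO =>
      rw [borderIter_zero] at hτO
      have hμO : τ + single i 1 ∉ O := fun h =>
        hμ (mem_iUnion_borderIter.mpr ⟨0, k.zero_le, by rwa [borderIter_zero]⟩)
      exact ⟨0, τ + single i 1, ⟨hμO, τ, hτO, i, rfl⟩, by simp [termDeg_eq_degree], by simp⟩
    | j + 1, hj, hτj =>
      obtain ⟨η, b, hb, hη, rfl⟩ := ih j (by omega) hτj
      refine ⟨η + single i 1, b, hb, ?_, add_right_comm _ _ _⟩
      rw [termDeg_add, termDeg_single_one]
      omega

lemma exists_mem_borderIter_add_of_mem_border {b : Term n} (hb : b ∈ border O) (η : Term n) :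
    ∃ j ≤ termDeg η + 1, η + b ∈ borderIter O j := by
  induction hd : termDeg η generalizing η with
  | zero =>
    refine ⟨1, le_rfl, ?_⟩
    rwa [termDeg_eq_zero_iff.mp hd, zero_add, borderIter_one]
  | succ d ih =>
    obtain ⟨σ, i, hσ, rfl⟩ := exists_eq_add_single_of_termDeg_eq_succ hd
    obtain ⟨j, hj, hσb⟩ := ih σ hσ
    by_cases hc : σ + single i 1 + b ∈ ⋃ j : Fin (d + 2), borderIter O j
    · obtain ⟨j', hj', hmem⟩ := mem_iUnion_borderIter.mp hc
      exact ⟨j', by omega, hmem⟩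
    · refine ⟨d + 2, le_rfl, ?_⟩
      rw [borderIter_succ]
      exact ⟨hc, σ + b, mem_iUnion_borderIter.mpr ⟨j, hj, hσb⟩, i, add_right_comm _ _ _⟩

lemma indO_add_le_of_mem_border {b : Term n} (hb : b ∈ border O) (η : Term n) :
    indO O (η + b) ≤ termDeg η + 1 :=
  let ⟨_, hj, hmem⟩ := exists_mem_borderIter_add_of_mem_border hb η
  (Nat.sInf_le hmem).trans hj

theorem indO_add_eq_of_forall_termDeg_le {b η : Term n} (hb : b ∈ border O) (hμ : η + b ∉ O)
    (hmax : ∀ b' ∈ border O, b' ≤ η + b → termDeg b' ≤ termDeg b) :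
    indO O (η + b) = termDeg η + 1 := by
  have hlow : ∀ k, η + b ∈ borderIter O k → termDeg η + 1 ≤ k := by
    rintro (_ | k) hk
    · exact absurd (by rwa [borderIter_zero] at hk) hμ
    · obtain ⟨η', b', hb', hη', heq⟩ := exists_eq_add_of_mem_borderIter_succ hk
      have hdeg : termDeg η + termDeg b = termDeg η' + termDeg b' := by
        rw [← termDeg_add, ← termDeg_add, heq]
      have := hmax b' hb' (heq ▸ le_add_self)
      omega
  obtain ⟨j, -, hmem⟩ := exists_mem_borderIter_add_of_mem_border hb η
  exact le_antisymm (indO_add_le_of_mem_border hb η) (le_csInf ⟨j, hmem⟩ hlow)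

lemma exists_mem_border_between {δ μ : Term n} (hδ : δ ∈ O)
    (hδμ : δ ≤ μ) (hμ : μ ∉ O) : ∃ b ∈ border O, δ ≤ b ∧ b ≤ μ := by
  obtain ⟨b, ⟨hδb, hbμ, hbO⟩, hmin⟩ :=
    wellFounded_lt.has_min {b | δ ≤ b ∧ b ≤ μ ∧ b ∉ O} ⟨μ, hδμ, le_rfl, hμ⟩
  obtain ⟨i, hi⟩ : ∃ i, δ i < b i := by
    by_contra! h
    exact hbO (le_antisymm hδb h ▸ hδ)
  have hle : δ + single i 1 ≤ b := fun j => by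
    rcases eq_or_ne j i with rfl | hji
    · simpa using hi
    · simpa [single_apply, hji.symm] using hδb j
  obtain ⟨τ, rfl⟩ := le_iff_exists_add.mp hle
  have hτ : δ + τ ∈ O := by
    by_contra hτ
    refine hmin (δ + τ) ⟨le_self_add, le_trans ?_ hbμ, hτ⟩ ?_
    · rw [add_right_comm]; exact le_self_add
    · rw [add_right_comm]; exact lt_add_of_pos_right _ (by simp [pos_iff_ne_zero])
  exact ⟨_, ⟨hbO, δ + τ, hτ, i, add_right_comm _ _ _⟩, hδb, hbμ⟩

lemma indO_add_le_termDeg {δ η : Term n} (hδ : δ ∈ O) (hμ : η + δ ∉ O) :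
    indO O (η + δ) ≤ termDeg η := by
  obtain ⟨b, hb, hδb, hbμ⟩ := exists_mem_border_between hδ le_add_self hμ
  obtain ⟨c, rfl⟩ := le_iff_exists_add.mp hδb
  have hc : termDeg c ≠ 0 := fun h => hb.1 (by rwa [termDeg_eq_zero_iff.mp h, add_zero])
  obtain ⟨η', rfl⟩ := le_iff_exists_add.mp
    ((add_le_add_iff_left δ).mp (by rwa [add_comm η] at hbμ) : c ≤ η)
  have := indO_add_le_of_mem_border hb η'
  rw [show c + η' + δ = η' + (δ + c) by abel, termDeg_add]
  omega

end BorderIter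

lemma termDeg_le_of_mem_multSet {n m : ℕ} {β : Fin m → Term n}
    (hβdeg : Monotone fun i => termDeg (β i)) {η : Term n} {i j : Fin m}
    (hη : η ∈ multSet β i) (h : β j ≤ η + β i) : termDeg (β j) ≤ termDeg (β i) :=
  hβdeg (not_lt.mp fun hij => hη j hij h)

theorem indO_cone_and_tail_general {n : ℕ}
    (O : Set (Term n)) (hO : IsOrderIdeal O)
    {m : ℕ} (β : Fin m → Term n)
    (hβrange : Set.range β = border O)
    (hβdeg : Monotone fun i => termDeg (β i))
    (η : Term n) (i : Fin m) (hη : η ∈ multSet β i) :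
    indO O (η + β i) = termDeg η + 1 ∧
      ∀ δ ∈ O, η + δ ∉ O →
        indO O (η + δ) ≤ termDeg η ∧ termDeg η < indO O (η + β i) := by
  have hβi : β i ∈ border O := hβrange ▸ Set.mem_range_self i
  have hcone : indO O (η + β i) = termDeg η + 1 := by
    refine indO_add_eq_of_forall_termDeg_le hβi (fun h => hβi.1 (hO _ _ h le_add_self)) ?_
    rintro b hb hle
    obtain ⟨j, rfl⟩ := hβrange.symm ▸ hb
    exact termDeg_le_of_mem_multSet hβdeg hη hle
  exact ⟨hcone, fun δ hδ hμ => ⟨indO_add_le_termDeg hδ hμ, by omega⟩⟩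

/-- if `η ∈ M_(β_i)` for the degree-ordered border reduction structure,
then `ind_O(η β_i) = deg η + 1`, and for every `δ ∈ O` with `η δ ∉ O` one has
`ind_O(η δ) ≤ deg η < ind_O(η β_i)`. -/
theorem indO_cone_and_tail {n : ℕ}
    (O : Set (Term n)) (hO : IsOrderIdeal O) (hOfin : O.Finite)
    {m : ℕ} (β : Fin m → Term n) (hβinj : Function.Injective β)
    (hβrange : Set.range β = border O)
    (hβdeg : Monotone fun i => termDeg (β i))
    (η : Term n) (i : Fin m) (hη : η ∈ multSet β i) :
    indO O (η + β i) = termDeg η + 1 ∧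
      ∀ δ ∈ O, η + δ ∉ O →
        indO O (η + δ) ≤ termDeg η ∧ termDeg η < indO O (η + β i) :=
  indO_cone_and_tail_general O hO β hβrange hβdeg η i hη
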